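/- arXiv:1004.3630 — 2 statements merged into one kernel-verified Lean document; each statement's English description precedes it below -/
import Mathlib

section
/- Let A : T → ℝⁿ be a monotone allocation rule on a single-parameter domain T = T₁ × ... × Tₙ (each Tᵢ an open interval), with ∫_{-∞}^{bᵢ} Aᵢ(b₋ᵢ, u) du < ∞ for all i and b. Define payments by Pᵢ(b) = bᵢ·Aᵢ(b) − ∫_{-∞}^{bᵢ} Aᵢ(b₋ᵢ,u) du. Then for every agent i, type tᵢ, bid bᵢ ∈ Tᵢ, and bids b₋ᵢ: tᵢ·Aᵢ(b₋ᵢ,tᵢ) − Pᵢ(b₋ᵢ,tᵢ) ≥ tᵢ·Aᵢ(b₋ᵢ,bᵢ) − Pᵢ(b₋ᵢ,bᵢ) (truthfulness), and tᵢ·Aᵢ(b₋ᵢ,tᵢ) − Pᵢ(b₋ᵢ,tᵢ) ≥ 0 (individual rationality). -/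
/-!
With the bids of the others fixed, write `f u = Aᵢ(b₋ᵢ, u)` and `F x = ∫_{-∞}^x f`. Bidding `x`
with true type `t` yields utility `(t - x) f(x) + F x`, and truthful bidding yields `F t`. So
truthfulness says that `f x` is a subgradient of `F` at `x`, i.e. `(t - x) f(x) ≤ ∫ₓᵗ f`, which
holds because `f` is monotone on the interval between `x` and `t`; individual rationality is
`F t ≥ 0`.
-/

open MeasureTheory Set

theorem MonotoneOn.sub_mul_le_intervalIntegral {f : ℝ → ℝ} {x t : ℝ}
    (hf : MonotoneOn f (uIcc x t)) : (t - x) * f x ≤ ∫ u in x..t, f u := by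
  have hint : IntervalIntegrable f volume x t := hf.intervalIntegrable
  rcases le_total x t with hxt | htx
  · calc (t - x) * f x = ∫ _ in x..t, f x := by simp
      _ ≤ ∫ u in x..t, f u :=
        intervalIntegral.integral_mono_on hxt intervalIntegrable_const hint fun u hu =>
          hf (by simp [hxt]) (by simpa [uIcc_of_le hxt] using hu) hu.1
  · have hle : ∫ u in t..x, f u ≤ ∫ _ in t..x, f x :=
      intervalIntegral.integral_mono_on htx hint.symm intervalIntegrable_const fun u hu =>
        hf (by simpa [uIcc_of_ge htx] using hu) (by simp [htx]) hu.2
    rw [intervalIntegral.integral_symm]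
    simp only [intervalIntegral.integral_const, smul_eq_mul] at hle
    linarith

theorem stmt_11_general {n : ℕ} (T : Fin n → Set ℝ)
    (hT : ∀ i, IsOpen (T i) ∧ (T i).OrdConnected ∧ (T i).Nonempty)
    (A : (Fin n → ℝ) → Fin n → ℝ)
    (hnonneg : ∀ b i, 0 ≤ A b i)
    (hmono : ∀ (i : Fin n) (b : Fin n → ℝ),
      MonotoneOn (fun u => A (Function.update b i u) i) (T i))
    (hint : ∀ (i : Fin n) (b : Fin n → ℝ),
      IntegrableOn (fun u => A (Function.update b i u) i) (Set.Iio (b i)))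
    (P : (Fin n → ℝ) → Fin n → ℝ)
    (hP : ∀ (b : Fin n → ℝ) (i : Fin n),
      P b i = b i * A b i - ∫ u in Set.Iio (b i), A (Function.update b i u) i) :
    ∀ (i : Fin n) (b : Fin n → ℝ) (t : ℝ), (∀ j, b j ∈ T j) → t ∈ T i →
      (t * A (Function.update b i t) i - P (Function.update b i t) i
          ≥ t * A b i - P b i) ∧
      0 ≤ t * A (Function.update b i t) i - P (Function.update b i t) i := by
  intro i b t hb ht
  set f : ℝ → ℝ := fun u => A (Function.update b i u) i
  have hf_int (x : ℝ) : IntegrableOn f (Iio x) := by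
    simpa [f] using hint i (Function.update b i x)
  have hPt : P (Function.update b i t) i = t * f t - ∫ u in Iio t, f u := by
    simp [hP, f]
  have hPb : P b i = b i * f (b i) - ∫ u in Iio (b i), f u := by
    simp [hP, f]
  have hAb : A b i = f (b i) := by simp [f]
  have hsubgrad : (t - b i) * f (b i) ≤ ∫ u in b i..t, f u :=
    ((hmono i b).mono ((hT i).2.1.uIcc_subset (hb i) ht)).sub_mul_le_intervalIntegral
  have hsplit := intervalIntegral.integral_Iio_sub_Iio' (hf_int t) (hf_int (b i))
  have hF_nonneg : 0 ≤ ∫ u in Iio t, f u :=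
    setIntegral_nonneg measurableSet_Iio fun u _ => hnonneg _ _
  change t * f t - _ ≥ _ ∧ 0 ≤ t * f t - _
  rw [hPt, hPb, hAb]
  constructor <;> linarith [sub_mul t (b i) (f (b i))]

/-- Myerson/Archer–Tardos, "if" direction with normalized payments.  Let `A` be a monotone
(nonnegative) allocation rule on a single-parameter domain `T = T₁ × ⋯ × Tₙ` (each `Tᵢ` a
nonempty open interval), interpreted as `0` outside `Tᵢ`, with finite Myerson integrals.
Define payments `Pᵢ(b) = bᵢ·Aᵢ(b) − ∫_{-∞}^{bᵢ} Aᵢ(b₋ᵢ,u) du`.  Then for every agent `i`,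
true type `tᵢ ∈ Tᵢ`, bid `bᵢ ∈ Tᵢ` and bids `b₋ᵢ` of the others, truthful bidding maximizes
the utility `tᵢ·Aᵢ − Pᵢ` (truthfulness) and yields nonnegative utility (individual
rationality). -/
theorem stmt_11 {n : ℕ} (T : Fin n → Set ℝ)
    (hT : ∀ i, IsOpen (T i) ∧ (T i).OrdConnected ∧ (T i).Nonempty)
    (A : (Fin n → ℝ) → Fin n → ℝ)
    (hnonneg : ∀ b i, 0 ≤ A b i)
    (hzero : ∀ (i : Fin n) (b : Fin n → ℝ) (u : ℝ), u ∉ T i →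
      A (Function.update b i u) i = 0)
    (hmono : ∀ (i : Fin n) (b : Fin n → ℝ),
      MonotoneOn (fun u => A (Function.update b i u) i) (T i))
    (hint : ∀ (i : Fin n) (b : Fin n → ℝ),
      IntegrableOn (fun u => A (Function.update b i u) i) (Set.Iio (b i)))
    (P : (Fin n → ℝ) → Fin n → ℝ)
    (hP : ∀ (b : Fin n → ℝ) (i : Fin n),
      P b i = b i * A b i - ∫ u in Set.Iio (b i), A (Function.update b i u) i) :
    ∀ (i : Fin n) (b : Fin n → ℝ) (t : ℝ), (∀ j, b j ∈ T j) → t ∈ T i →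
      (t * A (Function.update b i t) i - P (Function.update b i t) i
          ≥ t * A b i - P b i) ∧
      0 ≤ t * A (Function.update b i t) i - P (Function.update b i t) i :=
  stmt_11_general T hT A hnonneg hmono hint P hP
end

section
/- Let T = (0,∞)ⁿ, let A be a monotone allocation rule, and let x be the vector of bids modified by independent canonical self-resampling procedures with resampling probability μ ∈ (0,1), so E[xᵢ] = (1 − μ/(2−μ))·bᵢ for each i. If A is α-approximate for social welfare (α·E[SW(A(t),t)] ≥ OPT(t) for all t, where SW(o,t) = Σᵢ tᵢ·aᵢ(o) and OPT(t) = max_o SW(o,t)), then α·E[SW(A(x), b)] ≥ (1 − μ/(2−μ))·OPT(b). -/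
open MeasureTheory
open scoped ProbabilityTheory

/-- Welfare bound for the generic transformation over positive types.  Let `x` be the
vector of bids modified by independent canonical self-resampling procedures with
resampling probability `μ ∈ (0,1)`, so that `0 < xᵢ ≤ bᵢ` pointwise and
`E[xᵢ] = (1 − μ/(2−μ))·bᵢ` for each `i`.  If the allocation rule `A` is `α`-approximate
for social welfare (`α·SW(A(t),t) ≥ OPT(t)` for all positive type vectors `t`), then
`α·E[SW(A(x), b)] ≥ (1 − μ/(2−μ))·OPT(b)`. -/
theorem stmt_15 {n : ℕ} {Ω : Type*} [MeasureSpace Ω]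
    [IsProbabilityMeasure (ℙ : Measure Ω)]
    (μ α : ℝ) (hμ : μ ∈ Set.Ioo (0:ℝ) 1) (hα : 1 ≤ α)
    (O : Type*) (a : O → Fin n → ℝ) (ha : ∀ o i, 0 ≤ a o i)
    (A : (Fin n → ℝ) → O)
    (OPT : (Fin n → ℝ) → ℝ)
    (hOPT_ub : ∀ (t : Fin n → ℝ), (∀ i, 0 < t i) →
      ∀ o : O, ∑ i, t i * a o i ≤ OPT t)
    (b : Fin n → ℝ) (hb : ∀ i, 0 < b i)
    (hOPT_ex : ∃ o : O, OPT b = ∑ i, b i * a o i)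
    (x : Ω → Fin n → ℝ) (hxmeas : Measurable x)
    (hxpos : ∀ ω i, 0 < x ω i) (hxle : ∀ ω i, x ω i ≤ b i)
    (hxmean : ∀ i, (∫ ω, x ω i ∂(ℙ : Measure Ω)) = (1 - μ/(2-μ)) * b i)
    (hintx : ∀ i, Integrable (fun ω => x ω i) (ℙ : Measure Ω))
    (hintSW : Integrable (fun ω => ∑ i, b i * a (A (x ω)) i) (ℙ : Measure Ω))
    (hintSWx : Integrable (fun ω => ∑ i, x ω i * a (A (x ω)) i) (ℙ : Measure Ω))
    (happrox : ∀ (t : Fin n → ℝ), (∀ i, 0 < t i) →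
      α * ∑ i, t i * a (A t) i ≥ OPT t) :
    α * (∫ ω, ∑ i, b i * a (A (x ω)) i ∂(ℙ : Measure Ω))
      ≥ (1 - μ/(2-μ)) * OPT b := by
  obtain ⟨o, ho⟩ := hOPT_ex
  have hα0 : (0:ℝ) ≤ α := le_trans zero_le_one hα
  have h1 : ∀ ω, ∑ i, x ω i * a o i ≤ α * ∑ i, b i * a (A (x ω)) i := by
    intro ω
    have h2 : ∑ i, x ω i * a o i ≤ OPT (x ω) := hOPT_ub _ (hxpos ω) o
    have h3 : OPT (x ω) ≤ α * ∑ i, x ω i * a (A (x ω)) i := happrox _ (hxpos ω)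
    have h4 : ∑ i, x ω i * a (A (x ω)) i ≤ ∑ i, b i * a (A (x ω)) i :=
      Finset.sum_le_sum fun i _ => mul_le_mul_of_nonneg_right (hxle ω i) (ha _ i)
    calc ∑ i, x ω i * a o i ≤ OPT (x ω) := h2
      _ ≤ α * ∑ i, x ω i * a (A (x ω)) i := h3
      _ ≤ α * ∑ i, b i * a (A (x ω)) i := mul_le_mul_of_nonneg_left h4 hα0
  have hint1 : Integrable (fun ω => ∑ i, x ω i * a o i) (ℙ : Measure Ω) :=
    integrable_finset_sum _ fun i _ => (hintx i).mul_const _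
  have hmono := integral_mono hint1 (hintSW.const_mul α) h1
  rw [integral_const_mul] at hmono
  have hcalc : (∫ ω, ∑ i, x ω i * a o i ∂(ℙ : Measure Ω)) = (1 - μ/(2-μ)) * OPT b := by
    rw [integral_finset_sum _ (fun i _ => (hintx i).mul_const _), ho, Finset.mul_sum]
    refine Finset.sum_congr rfl fun i _ => ?_
    rw [integral_mul_const, hxmean i, mul_assoc]
  linarith
end
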